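/- arXiv:2308.06606 — 5 statements merged into one kernel-verified Lean document; each statement's English description precedes it below -/
import Mathlib

section
/- Let R be a commutative Noetherian local ring, M a finitely generated R-module with annihilator J = Ann_R(M), and N a finitely generated R-module. If M ⊗_R N ≅ M^{⊕μ(N)} (where μ(N) is the minimal number of generators of N), then N/JN is a free R/J-module of rank μ(N). -/
open TensorProduct

/-- The minimal number of generators of an `R`-module `M`. -/
noncomputable def minGens (R : Type*) [Semiring R] (M : Type*) [AddCommMonoid M]
    [Module R M] : ℕ :=
  sInf {n : ℕ | ∃ f : (Fin n → R) →ₗ[R] M, Function.Surjective f}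

/-!
Choose a surjection `f : R^μ → N` with `μ = μ(N)`. Tensoring with `M` gives a surjection
`M^μ ≅ M ⊗ R^μ → M ⊗ N ≅ M^μ`, i.e. a surjective endomorphism of a finitely generated module,
which is therefore injective (Vasconcelos). So `m ⊗ v = 0` for every `v ∈ ker f` and `m ∈ M`,
i.e. every coordinate of `v` kills `M`: `ker f ⊆ J R^μ`. Hence `f` induces
`N / JN ≅ R^μ / J R^μ ≅ (R/J)^μ`.
-/

theorem exists_surjective_fin_minGens (R : Type*) [Semiring R] (N : Type*) [AddCommMonoid N]
    [Module R N] [Module.Finite R N] :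
    ∃ f : (Fin (minGens R N) → R) →ₗ[R] N, Function.Surjective f :=
  Nat.sInf_mem (Module.Finite.exists_fin' R N)

section

variable {R : Type*} [CommRing R] {P N : Type*} [AddCommGroup P] [Module R P]
  [AddCommGroup N] [Module R N]

theorem LinearMap.injective_of_surjective_of_linearEquiv [Module.Finite R P] (g : P →ₗ[R] N)
    (hg : Function.Surjective g) (e : N ≃ₗ[R] P) : Function.Injective g := by
  simpa using OrzechProperty.injective_of_surjective_endomorphism (e.toLinearMap ∘ₗ g)
    (e.surjective.comp hg)

theorem Submodule.pi_mem_smul_top {ι : Type*} [Finite ι] {I : Ideal R} {v : ι → R}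
    (hv : ∀ i, v i ∈ I) : v ∈ I • (⊤ : Submodule R (ι → R)) := by
  classical
  cases nonempty_fintype ι
  rw [pi_eq_sum_univ v]
  exact Submodule.sum_mem _ fun i _ ↦ Submodule.smul_mem_smul (hv i) Submodule.mem_top

theorem LinearMap.ker_le_annihilator_smul_top_of_lTensor_injective {ι : Type*} [Finite ι]
    (M : Type*) [AddCommGroup M] [Module R M] (f : (ι → R) →ₗ[R] N)
    (hf : Function.Injective (f.lTensor M)) :
    LinearMap.ker f ≤ Module.annihilator R M • ⊤ := by
  classical
  cases nonempty_fintype ι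
  intro v hv
  refine Submodule.pi_mem_smul_top fun i ↦ Module.mem_annihilator.mpr fun m ↦ ?_
  have hmv : m ⊗ₜ[R] v = 0 := hf (by simp [LinearMap.mem_ker.mp hv])
  simpa using congr_fun (congr_arg (piScalarRight R R M ι) hmv) i

theorem LinearMap.ker_mkQ_comp_eq_smul_top_of_surjective (I : Ideal R) {f : P →ₗ[R] N}
    (hf : Function.Surjective f) (hker : LinearMap.ker f ≤ I • ⊤) :
    LinearMap.ker ((I • ⊤ : Submodule R N).mkQ ∘ₗ f) = I • ⊤ := by
  have hmap : (I • ⊤ : Submodule R P).map f = I • ⊤ := by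
    rw [Submodule.map_smul'', Submodule.map_top, LinearMap.range_eq_top.mpr hf]
  rw [LinearMap.ker_comp, Submodule.ker_mkQ, ← hmap, Submodule.comap_map_eq, sup_eq_left.mpr hker]

noncomputable def quotSMulTopEquivOfSurjective (I : Ideal R) {f : P →ₗ[R] N}
    (hf : Function.Surjective f) (hker : LinearMap.ker f ≤ I • ⊤) :
    (P ⧸ (I • ⊤ : Submodule R P)) ≃ₗ[R] N ⧸ (I • ⊤ : Submodule R N) :=
  (Submodule.quotEquivOfEq _ _ (LinearMap.ker_mkQ_comp_eq_smul_top_of_surjective I hf hker)).symm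
    ≪≫ₗ LinearMap.quotKerEquivOfSurjective _ ((Submodule.mkQ_surjective _).comp hf)

noncomputable def piQuotSMulTopEquiv (ι : Type*) [Fintype ι] [DecidableEq ι] (I : Ideal R) :
    ((ι → R) ⧸ (I • ⊤ : Submodule R (ι → R))) ≃ₗ[R] (ι → R ⧸ I) :=
  (quotTensorEquivQuotSMul (ι → R) I).symm ≪≫ₗ piScalarRight R R (R ⧸ I) ι

end

theorem stmt0_general {R : Type*} [CommRing R]
    {M N : Type*} [AddCommGroup M] [Module R M] [Module.Finite R M]
    [AddCommGroup N] [Module R N] [Module.Finite R N]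
    (J : Ideal R) (hJ : J = Module.annihilator R M)
    (h : Nonempty ((M ⊗[R] N) ≃ₗ[R] (Fin (minGens R N) → M))) :
    Nonempty ((N ⧸ (J • (⊤ : Submodule R N))) ≃ₗ[R] (Fin (minGens R N) → R ⧸ J)) := by
  obtain ⟨e⟩ := h
  obtain ⟨f, hf⟩ := exists_surjective_fin_minGens R N
  have hinj : Function.Injective (f.lTensor M) :=
    (f.lTensor M).injective_of_surjective_of_linearEquiv (LinearMap.lTensor_surjective M hf)
      (e ≪≫ₗ (piScalarRight R R M _).symm)
  have hker : LinearMap.ker f ≤ J • ⊤ :=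
    hJ ▸ f.ker_le_annihilator_smul_top_of_lTensor_injective M hinj
  exact ⟨(quotSMulTopEquivOfSurjective J hf hker).symm ≪≫ₗ piQuotSMulTopEquiv _ J⟩

/-- If `R` is a commutative Noetherian local ring, `M`, `N` are finitely generated
`R`-modules, `J = Ann_R M`, and `M ⊗_R N ≅ M^{μ(N)}`, then `N/JN` is a free
`R/J`-module of rank `μ(N)`. -/
theorem stmt0 {R : Type*} [CommRing R] [IsNoetherianRing R] [IsLocalRing R]
    {M N : Type*} [AddCommGroup M] [Module R M] [Module.Finite R M]
    [AddCommGroup N] [Module R N] [Module.Finite R N]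
    (J : Ideal R) (hJ : J = Module.annihilator R M)
    (h : Nonempty ((M ⊗[R] N) ≃ₗ[R] (Fin (minGens R N) → M))) :
    Nonempty ((N ⧸ (J • (⊤ : Submodule R N))) ≃ₗ[R] (Fin (minGens R N) → R ⧸ J)) :=
  stmt0_general J hJ h
end

section
/- Let R be a commutative Noetherian local ring and M, N finitely generated R-modules. If N/JN ≅ (R/J)^{⊕μ(N)} where J = Ann_R(M), then M ⊗_R N ≅ M^{⊕μ(N)}. -/
/-!
Since `J` kills `M`, we have `M ≅ M ⊗ R/J`, so `M ⊗ -` factors through `R/J ⊗ -`, which turns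
`N` into `N/JN`. Hence `M ⊗ N ≅ M ⊗ N/JN ≅ M ⊗ (R/J)^μ ≅ (M ⊗ R/J)^μ ≅ M^μ`.
-/

open TensorProduct

namespace TensorProduct

variable {R M : Type*} [CommRing R] [AddCommGroup M] [Module R M] {J : Ideal R}

noncomputable def tensorQuotEquivOfLeAnnihilator (hJ : J ≤ Module.annihilator R M) :
    M ⊗[R] (R ⧸ J) ≃ₗ[R] M :=
  tensorQuotEquivQuotSMul M J ≪≫ₗ Submodule.quotEquivOfEqBot _
    (Submodule.le_annihilator_iff.mp (Submodule.annihilator_top (R := R) (M := M) ▸ hJ))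

noncomputable def tensorEquivTensorQuotSMulTop (N : Type*) [AddCommGroup N] [Module R N]
    (hJ : J ≤ Module.annihilator R M) :
    M ⊗[R] N ≃ₗ[R] M ⊗[R] (N ⧸ J • (⊤ : Submodule R N)) :=
  congr (tensorQuotEquivOfLeAnnihilator hJ).symm (LinearEquiv.refl R N) ≪≫ₗ
    TensorProduct.assoc R M (R ⧸ J) N ≪≫ₗ
    congr (LinearEquiv.refl R M) (quotTensorEquivQuotSMul N J)

noncomputable def tensorPiQuotEquivOfLeAnnihilator (ι : Type*) [Fintype ι] [DecidableEq ι]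
    (hJ : J ≤ Module.annihilator R M) :
    M ⊗[R] (ι → R ⧸ J) ≃ₗ[R] (ι → M) :=
  piRight R R M (fun _ : ι ↦ R ⧸ J) ≪≫ₗ
    LinearEquiv.piCongrRight fun _ ↦ tensorQuotEquivOfLeAnnihilator hJ

end TensorProduct

theorem stmt1_general {R : Type*} [CommRing R]
    {M N : Type*} [AddCommGroup M] [Module R M]
    [AddCommGroup N] [Module R N]
    (J : Ideal R) (hJ : J = Module.annihilator R M)
    (h : Nonempty ((N ⧸ (J • (⊤ : Submodule R N))) ≃ₗ[R] (Fin (minGens R N) → R ⧸ J))) :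
    Nonempty ((M ⊗[R] N) ≃ₗ[R] (Fin (minGens R N) → M)) := by
  obtain ⟨e⟩ := h
  exact ⟨tensorEquivTensorQuotSMulTop N hJ.le ≪≫ₗ congr (LinearEquiv.refl R M) e ≪≫ₗ
    tensorPiQuotEquivOfLeAnnihilator _ hJ.le⟩

/-- If `R` is a commutative Noetherian local ring, `M`, `N` are finitely generated
`R`-modules, `J = Ann_R M`, and `N/JN ≅ (R/J)^{μ(N)}`, then `M ⊗_R N ≅ M^{μ(N)}`. -/
theorem stmt1 {R : Type*} [CommRing R] [IsNoetherianRing R] [IsLocalRing R]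
    {M N : Type*} [AddCommGroup M] [Module R M] [Module.Finite R M]
    [AddCommGroup N] [Module R N] [Module.Finite R N]
    (J : Ideal R) (hJ : J = Module.annihilator R M)
    (h : Nonempty ((N ⧸ (J • (⊤ : Submodule R N))) ≃ₗ[R] (Fin (minGens R N) → R ⧸ J))) :
    Nonempty ((M ⊗[R] N) ≃ₗ[R] (Fin (minGens R N) → M)) :=
  stmt1_general J hJ h
end

section
/- Let R be a commutative Noetherian local ring and M ≠ 0, N finitely generated R-modules such that M ⊗_R N ≅ M^{⊕μ(N)}. Set J = Ann_R(M). Then for any finitely generated R-module L with J ⊆ Ann_R(L), there is an isomorphism Tor_1^R(L, N) ≅ L ⊗_R Ω^1_R(N), where Ω^1_R(N) denotes the first syzygy of N (the kernel of a minimal free cover R^{⊕μ(N)} → N). -/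
/-!
Write `F = R^{μ(N)}` and `K = ker (π : F → N)`. Since `M ⊗ F ≅ M^{μ(N)} ≅ M ⊗ N`, the surjection
`M ⊗ F → M ⊗ N` becomes a surjective endomorphism of a finitely generated module, hence is
injective (Vasconcelos); so `M ⊗ K → M ⊗ F` vanishes, i.e. all coordinates of elements of `K`
lie in `J = Ann M ⊆ Ann L`. Then `L ⊗ K → L ⊗ F` vanishes too, and since
`Tor₁(L, N) = ker (L ⊗ K → L ⊗ F)` this gives `Tor₁(L, N) ≅ L ⊗ K`.
-/

open CategoryTheory TensorProduct

universe u

theorem lTensor_subtype_eq_zero_iff_apply_mem_annihilator {R M ι : Type*} [CommRing R]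
    [AddCommGroup M] [Module R M] [Fintype ι] [DecidableEq ι] (K : Submodule R (ι → R)) :
    K.subtype.lTensor M = 0 ↔ ∀ x ∈ K, ∀ i, x i ∈ Module.annihilator R M := by
  have tmul_eq_zero_iff (m : M) (x : ι → R) : m ⊗ₜ[R] x = 0 ↔ ∀ i, x i • m = 0 := by
    rw [← (piScalarRight R R M ι).map_eq_zero_iff, funext_iff]
    simp [piScalarRightHom_tmul]
  constructor
  · intro h x hx i
    refine Module.mem_annihilator.2 fun m => (tmul_eq_zero_iff m x).1 ?_ i
    simpa using LinearMap.congr_fun h (m ⊗ₜ ⟨x, hx⟩)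
  · intro h
    ext m x
    exact (tmul_eq_zero_iff m x).2 fun i => Module.mem_annihilator.1 (h x x.2 i) m

theorem lTensor_ker_subtype_eq_zero_of_linearEquiv {R M N F : Type*} [CommRing R]
    [AddCommGroup M] [Module R M] [AddCommGroup N] [Module R N] [AddCommGroup F] [Module R F]
    [Module.Finite R (M ⊗[R] F)] (e : M ⊗[R] N ≃ₗ[R] M ⊗[R] F) (π : F →ₗ[R] N)
    (hπ : Function.Surjective π) :
    (LinearMap.ker π).subtype.lTensor M = 0 := by
  have hinj : Function.Injective (π.lTensor M) :=
    (OrzechProperty.injective_of_surjective_endomorphism (e.toLinearMap ∘ₗ π.lTensor M)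
      (e.surjective.comp (LinearMap.lTensor_surjective M hπ))).of_comp (f := e)
  ext m x
  apply hinj
  simp

open CategoryTheory.Limits

noncomputable section

namespace CategoryTheory

variable {C : Type*} [Category C] [Abelian C]

namespace ProjectiveResolution

variable {Z : C} (P : ProjectiveResolution Z)

lemma d_two_one_comp_kernelLift :
    P.complex.d 2 1 ≫ kernel.lift (P.π.f 0) (P.complex.d 1 0) P.complex_d_comp_π_f_zero = 0 := by
  rw [← cancel_mono (kernel.ι _), Category.assoc, kernel.lift_ι, zero_comp, P.complex.d_comp_d]

lemma exact_d_two_one_kernelLift :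
    (ShortComplex.mk _ _ P.d_two_one_comp_kernelLift).Exact := by
  let φ : ShortComplex.mk _ _ P.d_two_one_comp_kernelLift ⟶
      ShortComplex.mk _ _ (P.complex.d_comp_d 2 1 0) :=
    ShortComplex.homMk (𝟙 _) (𝟙 _) (kernel.ι (P.π.f 0)) (by simp)
      (by dsimp; rw [Category.id_comp]; exact (kernel.lift_ι _ _ _).symm)
  have : Epi φ.τ₁ := inferInstanceAs (Epi (𝟙 _))
  have : IsIso φ.τ₂ := inferInstanceAs (IsIso (𝟙 _))
  have : Mono φ.τ₃ := inferInstanceAs (Mono (kernel.ι _))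
  exact (ShortComplex.exact_iff_of_epi_of_isIso_of_mono φ).2 (P.exact_succ 0)

variable [EnoughProjectives C] {D : Type*} [Category D] [Abelian D] (F : C ⥤ D) [F.Additive]
  [PreservesFiniteColimits F]

/-- `H₁(F(P))` is the cokernel of `F(P₂ ⟶ P₁)`, which right exactness identifies with `F(K)`,
`K` being the kernel of `P₀ ⟶ Z`. -/
def isoLeftDerivedOneOfMapKernelι (h : F.map (kernel.ι (P.π.f 0)) = 0) :
    (F.leftDerived 1).obj Z ≅ F.obj (kernel (P.π.f 0)) :=
  let S := ((F.mapHomologicalComplex _).obj P.complex).sc' 2 1 0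
  have hg : S.g = 0 := by
    change F.map (P.complex.d 1 0) = 0
    rw [← kernel.lift_ι (P.π.f 0) (P.complex.d 1 0) P.complex_d_comp_π_f_zero, F.map_comp, h,
      comp_zero]
  have : Epi (kernel.lift (P.π.f 0) (P.complex.d 1 0) P.complex_d_comp_π_f_zero) :=
    P.exact₀.epi_kernelLift
  P.isoLeftDerivedObj F 1 ≪≫ HomologicalComplex.homologyIsoSc' _ 2 1 0 (by simp) (by simp) ≪≫
    (ShortComplex.RightHomologyData.ofIsColimitCokernelCofork S hg _
      (CokernelCofork.mapIsColimit _ P.exact_d_two_one_kernelLift.gIsCokernel F)).homologyIso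

end ProjectiveResolution

variable [EnoughProjectives C]

open Projective

lemma Projective.d_comp_self {X Y : C} (f : X ⟶ Y) : d f ≫ f = 0 :=
  (Category.assoc _ _ _).trans ((congrArg _ (kernel.condition f)).trans comp_zero)

namespace ProjectiveResolution

variable {Z P : C} (p : P ⟶ Z)

/-- `ProjectiveResolution.ofComplex`, started from the given `p : P ⟶ Z` instead of
`Projective.π Z`. -/
def ofEpiComplex : ChainComplex C ℕ :=
  ChainComplex.mk' P (syzygies p) (d p) (fun f => ⟨_, d f, d_comp_self f⟩)

lemma ofEpiComplex_d_one_zero : (ofEpiComplex p).d 1 0 = d p := by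
  simp [ofEpiComplex]

instance [Projective P] (n : ℕ) : Projective ((ofEpiComplex p).X n) := by
  obtain (_ | _ | _ | n) := n
  · exact inferInstanceAs (Projective P)
  all_goals apply Projective.projective_over

lemma ofEpiComplex_exactAt_succ (n : ℕ) :
    (ofEpiComplex p).ExactAt (n + 1) := by
  rw [HomologicalComplex.exactAt_iff' _ (n + 1 + 1) (n + 1) n (by simp) (by simp)]
  refine ShortComplex.exact_of_iso ?_ (exact_d_f ((ofEpiComplex p).d (n + 1) n))
  refine ShortComplex.isoMk ((show (ofEpiComplex p).X (n + 2) ≅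
    syzygies ((ofEpiComplex p).d (n + 1) n) from ChainComplex.mk'XIso _ _ _ _ n).symm)
    (Iso.refl _) (Iso.refl _) ?_ ?_
  · show _ ≫ (ofEpiComplex p).d (n + 2) (n + 1) = _
    refine (congrArg (fun x => _ ≫ x) (ChainComplex.mk'_d P (syzygies p) (d p) _ n)).trans ?_
    exact (Iso.inv_hom_id_assoc _ _).trans (Category.comp_id _).symm
  · exact (Category.id_comp _).trans (Category.comp_id _).symm

def ofEpi [Projective P] [Epi p] : ProjectiveResolution Z where
  complex := ofEpiComplex p
  π := (ChainComplex.toSingle₀Equiv _ _).symm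
    ⟨p, by rw [ofEpiComplex_d_one_zero]; exact d_comp_self p⟩
  quasiIso := ⟨fun n => by
    cases n
    · rw [ChainComplex.quasiIsoAt₀_iff, ShortComplex.quasiIso_iff_of_zeros']
      · refine (ShortComplex.exact_and_epi_g_iff_of_iso ?_).2
          ⟨exact_d_f p, by dsimp; infer_instance⟩
        exact ShortComplex.isoMk (Iso.refl _) (Iso.refl _) (Iso.refl _)
          ((Category.id_comp _).trans
            ((ofEpiComplex_d_one_zero p).symm.trans (Category.comp_id _).symm))
          ((Category.id_comp _).trans
            ((ChainComplex.toSingle₀Equiv_symm_apply_f_zero (C := ofEpiComplex p) p _).symm.trans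
              (Category.comp_id _).symm))
      all_goals rfl
    · rw [quasiIsoAt_iff_exactAt']
      · apply ofEpiComplex_exactAt_succ
      · apply ChainComplex.exactAt_succ_single_obj⟩

lemma ofEpi_π_f_zero [Projective P] [Epi p] : (ofEpi p).π.f 0 = p :=
  ChainComplex.toSingle₀Equiv_symm_apply_f_zero _ _

end ProjectiveResolution

end CategoryTheory

namespace ModuleCat

def torOneIsoTensorKerOfLTensorEqZero {R : Type u} [CommRing R] {F N L : Type u}
    [AddCommGroup F] [Module R F] [Module.Projective R F] [AddCommGroup N] [Module R N]
    [AddCommGroup L] [Module R L] (π : F →ₗ[R] N) (hπ : Function.Surjective π)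
    (h : (LinearMap.ker π).subtype.lTensor L = 0) :
    ((Tor (ModuleCat.{u} R) 1).obj (of R L)).obj (of R N) ≅ of R (L ⊗[R] LinearMap.ker π) :=
  let p : of R F ⟶ of R N := ofHom π
  have : Epi p := (epi_iff_surjective p).2 hπ
  let P := ProjectiveResolution.ofEpi p
  let G := (MonoidalCategory.tensoringLeft (ModuleCat.{u} R)).obj (of R L)
  have hker : LinearMap.ker (P.π.f 0).hom = LinearMap.ker π :=
    congrArg (fun q => LinearMap.ker (Hom.hom q)) (ProjectiveResolution.ofEpi_π_f_zero p)
  have hG : G.map (kernel.ι (P.π.f 0)) = 0 := by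
    have hsub : G.map (ofHom (LinearMap.ker (P.π.f 0).hom).subtype) = 0 := hom_ext (hker ▸ h)
    rw [← kernelIsoKer_hom_ker_subtype, G.map_comp, hsub, comp_zero]
  P.isoLeftDerivedOneOfMapKernelι G hG ≪≫
    G.mapIso (kernelIsoKer _ ≪≫ (LinearEquiv.ofEq _ _ hker).toModuleIso)

end ModuleCat

end

theorem stmt3_general {R : Type u} [CommRing R]
    {M N : Type u} [AddCommGroup M] [Module R M] [Module.Finite R M]
    [AddCommGroup N] [Module R N]
    (h : Nonempty ((M ⊗[R] N) ≃ₗ[R] (Fin (minGens R N) → M)))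
    (L : Type u) [AddCommGroup L] [Module R L]
    (hL : Module.annihilator R M ≤ Module.annihilator R L)
    (π : (Fin (minGens R N) → R) →ₗ[R] N) (hπ : Function.Surjective π) :
    Nonempty ((((Tor (ModuleCat.{u} R) 1).obj (ModuleCat.of R L)).obj (ModuleCat.of R N)) ≅
      ModuleCat.of R (L ⊗[R] (LinearMap.ker π))) := by
  obtain ⟨e⟩ := h
  have hM : (LinearMap.ker π).subtype.lTensor M = 0 :=
    lTensor_ker_subtype_eq_zero_of_linearEquiv (e ≪≫ₗ (piScalarRight R R M _).symm) π hπ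
  have hL' : (LinearMap.ker π).subtype.lTensor L = 0 :=
    (lTensor_subtype_eq_zero_iff_apply_mem_annihilator _).2 fun x hx i =>
      hL ((lTensor_subtype_eq_zero_iff_apply_mem_annihilator _).1 hM x hx i)
  exact ⟨ModuleCat.torOneIsoTensorKerOfLTensorEqZero π hπ hL'⟩

/-- Let `R` be a commutative Noetherian local ring, `M ≠ 0` and `N` finitely generated
`R`-modules with `M ⊗_R N ≅ M^{μ(N)}`, and set `J = Ann_R M`.  Then for every finitely
generated `R`-module `L` with `J ⊆ Ann_R L`, we have `Tor₁(L, N) ≅ L ⊗_R Ω¹(N)`, where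
`Ω¹(N)` is the kernel of a minimal free cover `R^{μ(N)} → N`. -/
theorem stmt3 {R : Type u} [CommRing R] [IsNoetherianRing R] [IsLocalRing R]
    {M N : Type u} [AddCommGroup M] [Module R M] [Module.Finite R M] [Nontrivial M]
    [AddCommGroup N] [Module R N] [Module.Finite R N]
    (h : Nonempty ((M ⊗[R] N) ≃ₗ[R] (Fin (minGens R N) → M)))
    (L : Type u) [AddCommGroup L] [Module R L] [Module.Finite R L]
    (hL : Module.annihilator R M ≤ Module.annihilator R L)
    (π : (Fin (minGens R N) → R) →ₗ[R] N) (hπ : Function.Surjective π) :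
    Nonempty ((((Tor (ModuleCat.{u} R) 1).obj (ModuleCat.of R L)).obj (ModuleCat.of R N)) ≅
      ModuleCat.of R (L ⊗[R] (LinearMap.ker π))) :=
  stmt3_general h L hL π hπ
end

section
/- Let (R, m, k) be a commutative Noetherian local ring and N a finitely generated R-module of finite length. If μ(N) > ℓ(mN) · μ(m), then some minimal generator of N lies in the socle of N, and consequently k is a direct summand of N. -/
open IsLocalRing

/-- The length of an `R`-module `M` (height of `⊤` in the submodule lattice). -/
noncomputable def mlength (R : Type*) [Semiring R] (M : Type*) [AddCommMonoid M]
    [Module R M] : ℕ∞ :=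
  Order.height (⊤ : Submodule R M)

/-!
Write `𝔪 = (r₁, …, r_t)` with `t = μ(𝔪)`. The map `N → (𝔪N)^t`, `x ↦ (rᵢ x)ᵢ`, has the socle
as its kernel, so `ℓ(N / Soc N) ≤ t · ℓ(𝔪N)`. If the socle were contained in `𝔪N`, then `N/𝔪N`
would be a quotient of `N / Soc N`, and by Nakayama `μ(N) = ℓ(N/𝔪N) ≤ t · ℓ(𝔪N)`, against the
hypothesis. A socle element `x ∉ 𝔪N` gives an embedding `k → N`, `1 ↦ x`, and a `k`-linear
functional on `N/𝔪N` that is `1` at the class of `x` splits it.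
-/

open Module Submodule

section MinGens

variable {R M : Type*} [Ring R] [AddCommGroup M] [Module R M]

lemma exists_surjective_iff_exists_span_eq_top {n : ℕ} :
    (∃ f : (Fin n → R) →ₗ[R] M, Function.Surjective f) ↔
      ∃ s : Fin n → M, span R (Set.range s) = ⊤ := by
  constructor
  · rintro ⟨f, hf⟩
    refine ⟨fun i => f (Pi.single i 1), ?_⟩
    have : Fintype.linearCombination R (fun i => f (Pi.single i 1)) = f := by
      ext; simp
    rw [← Fintype.range_linearCombination, this, LinearMap.range_eq_top.mpr hf]
  · rintro ⟨s, hs⟩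
    exact ⟨Fintype.linearCombination R s, by
      rw [← LinearMap.range_eq_top, Fintype.range_linearCombination, hs]⟩

lemma minGens_le_of_span_eq_top {n : ℕ} (s : Fin n → M) (hs : span R (Set.range s) = ⊤) :
    minGens R M ≤ n :=
  Nat.sInf_le (exists_surjective_iff_exists_span_eq_top.mpr ⟨s, hs⟩)

lemma exists_fin_minGens_span_eq_top [Module.Finite R M] :
    ∃ s : Fin (minGens R M) → M, span R (Set.range s) = ⊤ := by
  obtain ⟨n, s, hs⟩ := Module.Finite.exists_fin (R := R) (M := M)
  exact exists_surjective_iff_exists_span_eq_top.mp <|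
    Nat.sInf_mem (s := {n | ∃ f : (Fin n → R) →ₗ[R] M, Function.Surjective f})
      ⟨n, exists_surjective_iff_exists_span_eq_top.mpr ⟨s, hs⟩⟩

lemma minGens_le_spanFinrank_top [Module.Finite R M] :
    minGens R M ≤ (⊤ : Submodule R M).spanFinrank := by
  obtain ⟨s, hcard, hs⟩ :=
    (Module.Finite.fg_top (R := R) (M := M)).exists_span_finset_card_eq_spanFinrank
  rw [← hcard]
  refine minGens_le_of_span_eq_top ((↑) ∘ s.equivFin.symm) ?_
  rwa [Set.range_comp, Equiv.range_eq_univ, Set.image_univ, Subtype.range_coe]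

end MinGens

section LocalRing

variable {R M : Type*} [CommRing R] [IsLocalRing R] [AddCommGroup M] [Module R M]

lemma spanFinrank_eq_length_quotient (P : Submodule R M) (hP : P.FG) :
    (P.spanFinrank : ℕ∞) = length R (P ⧸ maximalIdeal R • (⊤ : Submodule R P)) := by
  let : Field (R ⧸ maximalIdeal R) := Ideal.Quotient.field _
  have : Module.Finite R P := Module.Finite.iff_fg.mpr hP
  have : Module.Finite (R ⧸ maximalIdeal R) (P ⧸ maximalIdeal R • (⊤ : Submodule R P)) :=
    .of_restrictScalars_finite R _ _
  rw [spanFinrank_eq_finrank_quotient P hP,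
    length_eq_of_surjective (R := R ⧸ maximalIdeal R) Ideal.Quotient.mk_surjective]
  exact (length_eq_finrank _ _).symm

lemma minGens_le_length_quotient [Module.Finite R M] :
    (minGens R M : ℕ∞) ≤ length R (M ⧸ maximalIdeal R • (⊤ : Submodule R M)) := by
  let e : (↥(⊤ : Submodule R M) ⧸ maximalIdeal R • (⊤ : Submodule R ↥(⊤ : Submodule R M))) ≃ₗ[R]
      M ⧸ maximalIdeal R • (⊤ : Submodule R M) :=
    Quotient.equiv _ _ topEquiv (by rw [map_smul'', Submodule.map_top, LinearEquiv.range])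
  calc (minGens R M : ℕ∞) ≤ (⊤ : Submodule R M).spanFinrank := by
        exact_mod_cast minGens_le_spanFinrank_top
    _ = _ := by rw [spanFinrank_eq_length_quotient ⊤ Module.Finite.fg_top, e.length_eq]

end LocalRing

section Torsion

variable {R M : Type*} [CommRing R] [AddCommGroup M] [Module R M]

lemma length_quotient_torsionBySet_le {t : ℕ} (s : Fin t → R) :
    length R (M ⧸ torsionBySet R M (Set.range s)) ≤
      t * length R ↥(Ideal.span (Set.range s) • (⊤ : Submodule R M)) := by
  let φ : M →ₗ[R] Fin t → ↥(Ideal.span (Set.range s) • (⊤ : Submodule R M)) :=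
    LinearMap.pi fun i => (LinearMap.lsmul R M (s i)).codRestrict _ fun x =>
      smul_mem_smul (Ideal.subset_span ⟨i, rfl⟩) mem_top
  have hker : LinearMap.ker φ = torsionBySet R M (Set.range s) := by
    ext x
    simp only [LinearMap.mem_ker, mem_torsionBySet_iff, funext_iff, Subtype.ext_iff, Subtype.forall,
      Set.forall_mem_range]
    rfl
  calc length R (M ⧸ torsionBySet R M (Set.range s)) = length R (LinearMap.range φ) := by
        rw [← hker]; exact φ.quotKerEquivRange.length_eq
    _ ≤ length R (Fin t → ↥(Ideal.span (Set.range s) • (⊤ : Submodule R M))) :=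
        length_le_of_injective _ (LinearMap.range φ).injective_subtype
    _ = _ := by simp

lemma length_quotient_torsionBySet_ideal_le (I : Ideal R) (hI : I.FG) :
    length R (M ⧸ torsionBySet R M I) ≤ minGens R I * length R ↥(I • (⊤ : Submodule R M)) := by
  have : Module.Finite R I := Module.Finite.iff_fg.mpr hI
  obtain ⟨s, hs⟩ := exists_fin_minGens_span_eq_top (R := R) (M := I)
  have hspan : Ideal.span (Set.range (I.subtype ∘ s)) = I := by
    rw [Set.range_comp, Ideal.span, ← map_span, hs, Submodule.map_top, range_subtype]
  have := length_quotient_torsionBySet_le (M := M) (I.subtype ∘ s)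
  rwa [torsionBySet_eq_torsionBySet_span, hspan] at this

end Torsion

lemma LinearMap.isCompl_range_ker_of_comp_eq_id {R M N : Type*} [Ring R] [AddCommGroup M]
    [Module R M] [AddCommGroup N] [Module R N] {i : M →ₗ[R] N} {p : N →ₗ[R] M}
    (h : p ∘ₗ i = LinearMap.id) : IsCompl (LinearMap.range i) (LinearMap.ker p) := by
  have hi : Function.Injective i := Function.LeftInverse.injective (LinearMap.congr_fun h)
  have := LinearMap.isCompl_of_proj (f := i.rangeRestrict ∘ₗ p) <| by
    rintro ⟨_, c, rfl⟩
    ext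
    simp [← LinearMap.comp_apply p i, h]
  rwa [LinearMap.ker_comp, LinearMap.ker_rangeRestrict, LinearMap.ker_eq_bot.mpr hi,
    comap_bot] at this

section Socle

variable {R M : Type*} [CommRing R] [IsLocalRing R] [AddCommGroup M] [Module R M]

lemma exists_residueField_linearMap_apply_eq_one {x : M}
    (hx : x ∉ maximalIdeal R • (⊤ : Submodule R M)) :
    ∃ π : M →ₗ[R] ResidueField R, π x = 1 := by
  let : Module (ResidueField R) (M ⧸ maximalIdeal R • (⊤ : Submodule R M)) :=
    inferInstanceAs (Module (R ⧸ maximalIdeal R) _)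
  have : IsScalarTower R (ResidueField R) (M ⧸ maximalIdeal R • (⊤ : Submodule R M)) :=
    inferInstanceAs (IsScalarTower R (R ⧸ maximalIdeal R) _)
  have hx0 : mkQ (maximalIdeal R • (⊤ : Submodule R M)) x ≠ 0 := by
    rwa [mkQ_apply, Ne, Quotient.mk_eq_zero]
  obtain ⟨f, hf⟩ : ∃ f : Dual (ResidueField R) (M ⧸ maximalIdeal R • (⊤ : Submodule R M)),
      f (mkQ _ x) ≠ 0 := by
    by_contra! h
    exact hx0 ((forall_dual_apply_eq_zero_iff _ _).mp h)
  refine ⟨(((f (mkQ _ x))⁻¹ • f).restrictScalars R) ∘ₗ mkQ _, ?_⟩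
  simpa using inv_mul_cancel₀ hf

lemma exists_isCompl_residueField {x : M} (hx : ∀ r ∈ maximalIdeal R, r • x = 0)
    (hxm : x ∉ maximalIdeal R • (⊤ : Submodule R M)) :
    ∃ K S : Submodule R M, IsCompl K S ∧ Nonempty (K ≃ₗ[R] ResidueField R) := by
  obtain ⟨π, hπ⟩ := exists_residueField_linearMap_apply_eq_one hxm
  have hker : maximalIdeal R ≤ LinearMap.ker (LinearMap.toSpanSingleton R M x) := hx
  let ι : ResidueField R →ₗ[R] M := (maximalIdeal R).liftQ _ hker
  have hι (a : R) : ι (residue R a) = a • x := rfl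
  have h : π ∘ₗ ι = LinearMap.id := by
    ext c
    obtain ⟨a, rfl⟩ := residue_surjective c
    rw [LinearMap.comp_apply, hι, map_smul, hπ, Algebra.smul_def, mul_one,
      ResidueField.algebraMap_eq, LinearMap.id_apply]
  exact ⟨_, _, LinearMap.isCompl_range_ker_of_comp_eq_id h,
    ⟨(LinearEquiv.ofLeftInverse (LinearMap.congr_fun h)).symm⟩⟩

lemma exists_mem_socle_notMem_smul_top [IsNoetherianRing R] [Module.Finite R M]
    (h : length R ↥(maximalIdeal R • (⊤ : Submodule R M)) * minGens R (maximalIdeal R) <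
      minGens R M) :
    ∃ x : M, (∀ r ∈ maximalIdeal R, r • x = 0) ∧ x ∉ maximalIdeal R • (⊤ : Submodule R M) := by
  by_contra! hsoc
  have hle : torsionBySet R M (maximalIdeal R) ≤ maximalIdeal R • ⊤ := fun x hx =>
    hsoc x fun r hr => (mem_torsionBySet_iff _ _).mp hx ⟨r, hr⟩
  refine h.not_ge ?_
  calc (minGens R M : ℕ∞) ≤ length R (M ⧸ maximalIdeal R • (⊤ : Submodule R M)) :=
        minGens_le_length_quotient
    _ ≤ length R (M ⧸ torsionBySet R M (maximalIdeal R)) :=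
        length_le_of_surjective _ (factor_surjective hle)
    _ ≤ minGens R (maximalIdeal R) * length R ↥(maximalIdeal R • (⊤ : Submodule R M)) :=
        length_quotient_torsionBySet_ideal_le _ (maximalIdeal R).fg_of_isNoetherianRing
    _ = _ := mul_comm _ _

end Socle

lemma mlength_eq_length (R M : Type*) [Ring R] [AddCommGroup M] [Module R M] :
    mlength R M = length R M :=
  (length_eq_height R M).symm

theorem stmt10_general {R : Type*} [CommRing R] [IsNoetherianRing R] [IsLocalRing R]
    {N : Type*} [AddCommGroup N] [Module R N] [Module.Finite R N]
    (hgt : (minGens R N : ℕ∞) >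
      mlength R (maximalIdeal R • ⊤ : Submodule R N) * (minGens R (maximalIdeal R) : ℕ∞)) :
    (∃ x : N, (∀ r ∈ maximalIdeal R, r • x = 0) ∧
      x ∉ (maximalIdeal R • ⊤ : Submodule R N)) ∧
    (∃ K S : Submodule R N, IsCompl K S ∧ Nonempty (K ≃ₗ[R] ResidueField R)) := by
  rw [mlength_eq_length] at hgt
  obtain ⟨x, hx, hxm⟩ := exists_mem_socle_notMem_smul_top hgt
  exact ⟨⟨x, hx, hxm⟩, exists_isCompl_residueField hx hxm⟩

/-- Let `(R, m, k)` be a commutative Noetherian local ring and `N` a finitely generated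
`R`-module of finite length.  If `μ(N) > ℓ(mN) · μ(m)`, then some minimal generator of
`N` lies in the socle of `N`, and consequently `k` is a direct summand of `N`. -/
theorem stmt10 {R : Type*} [CommRing R] [IsNoetherianRing R] [IsLocalRing R]
    {N : Type*} [AddCommGroup N] [Module R N] [Module.Finite R N]
    (hfl : IsFiniteLength R N)
    (hgt : (minGens R N : ℕ∞) >
      mlength R (maximalIdeal R • ⊤ : Submodule R N) * (minGens R (maximalIdeal R) : ℕ∞)) :
    (∃ x : N, (∀ r ∈ maximalIdeal R, r • x = 0) ∧
      x ∉ (maximalIdeal R • ⊤ : Submodule R N)) ∧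
    (∃ K S : Submodule R N, IsCompl K S ∧ Nonempty (K ≃ₗ[R] ResidueField R)) :=
  stmt10_general hgt
end

section
/- Let R be a commutative Noetherian local ring and M a finitely generated R-module with M ⊗_R N ≅ M^{⊕μ(N)} for a finitely generated R-module N. If L is any nonzero finitely generated R-module with Ann_R(M) ⊆ Ann_R(L) and Tor_1^R(L, N) = 0, then N is free over R. -/
/-!
Take a surjection `p : R^μ → N` with `μ = μ(N)`. Then `M ⊗ p : M ⊗ R^μ → M ⊗ N ≅ M^μ ≅ M ⊗ R^μ` is,
up to isomorphism, a surjective endomorphism of a finitely generated module, hence injective. So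
every syzygy `x ∈ K = ker p` satisfies `m ⊗ x = 0` for all `m`, i.e. its coordinates lie in
`Ann M ⊆ Ann L`. Consequently `L ⊗ K → L ⊗ R^μ` is the zero map; as `Tor₁(L, N) = 0` it is also
injective, so `L ⊗ K = 0`. Over a local ring the tensor product of two nonzero finitely generated
modules is nonzero (reduce to the residue field), so `K = 0` and `N ≅ R^μ`.
-/

open CategoryTheory TensorProduct

universe u

namespace CategoryTheory.ProjectiveResolution

open Limits

variable {C : Type*} [Category* C] [Abelian C] [EnoughProjectives C] {X P₀ P₁ : C}
  (d : P₁ ⟶ P₀) (π : P₀ ⟶ X)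

noncomputable def complexOfPresentation : ChainComplex C ℕ :=
  ChainComplex.mk' P₀ P₁ d (fun f => ⟨_, Projective.d f,
    (Category.assoc _ _ _).trans (by rw [kernel.condition]; exact comp_zero)⟩)

lemma complexOfPresentation_d_one_zero : (complexOfPresentation d).d 1 0 = d := by
  simp [complexOfPresentation]

lemma complexOfPresentation_d_succ (k : ℕ) :
    (complexOfPresentation d).d (k + 2) (k + 1) =
      (ChainComplex.mk'XIso _ _ _ _ k).hom ≫ Projective.d ((complexOfPresentation d).d (k + 1) k) :=
  ChainComplex.mk'_d _ _ _ _ k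

lemma complexOfPresentation_exactAt_succ (k : ℕ) : (complexOfPresentation d).ExactAt (k + 1) := by
  rw [HomologicalComplex.exactAt_iff' _ (k + 2) (k + 1) k (by simp) (by simp)]
  refine ShortComplex.exact_of_iso ?_ (exact_d_f ((complexOfPresentation d).d (k + 1) k))
  refine ShortComplex.isoMk
    (ChainComplex.mk'XIso _ _ _ _ k : (complexOfPresentation d).X (k + 2) ≅ _).symm
    (Iso.refl _) (Iso.refl _) ?_ ?_
  · show _ ≫ (complexOfPresentation d).d (k + 2) (k + 1) = _ ≫ 𝟙 _
    rw [complexOfPresentation_d_succ]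
    exact (Iso.inv_hom_id_assoc _ _).trans (Category.comp_id _).symm
  · exact (Category.id_comp _).trans (Category.comp_id _).symm

instance [Projective P₀] [Projective P₁] (k : ℕ) : Projective ((complexOfPresentation d).X k) := by
  obtain (_ | _ | _ | k) := k
  · assumption
  · assumption
  all_goals apply Projective.projective_over

variable {d π} in
noncomputable def augmentationOfPresentation (w : d ≫ π = 0) :
    complexOfPresentation d ⟶ (ChainComplex.single₀ C).obj X :=
  (ChainComplex.toSingle₀Equiv _ _).symm ⟨π, by rw [complexOfPresentation_d_one_zero]; exact w⟩

lemma augmentationOfPresentation_f_zero (w : d ≫ π = 0) :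
    (augmentationOfPresentation w).f 0 = π :=
  ChainComplex.toSingle₀Equiv_symm_apply_f_zero _ _

noncomputable def ofPresentation [Projective P₀] [Projective P₁] (w : d ≫ π = 0)
    (hexact : (ShortComplex.mk d π w).Exact) [Epi π] :
    ProjectiveResolution X where
  complex := complexOfPresentation d
  π := augmentationOfPresentation w
  quasiIso := ⟨fun k => by
    cases k with
    | zero =>
      rw [ChainComplex.quasiIsoAt₀_iff, ShortComplex.quasiIso_iff_of_zeros']
      · refine ⟨ShortComplex.exact_of_iso ?_ hexact, ?_⟩
        · refine ShortComplex.isoMk (Iso.refl _) (Iso.refl _) (Iso.refl _) ?_ ?_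
          · show 𝟙 P₁ ≫ (complexOfPresentation d).d 1 0 = d ≫ 𝟙 P₀
            rw [complexOfPresentation_d_one_zero]
            exact (Category.id_comp d).trans (Category.comp_id d).symm
          · show 𝟙 P₀ ≫ (augmentationOfPresentation w).f 0 = π ≫ 𝟙 X
            rw [augmentationOfPresentation_f_zero]
            exact (Category.id_comp π).trans (Category.comp_id π).symm
        · show Epi ((augmentationOfPresentation w).f 0)
          rwa [augmentationOfPresentation_f_zero]
      all_goals rfl
    | succ k =>
      rw [quasiIsoAt_iff_exactAt']
      · exact complexOfPresentation_exactAt_succ d k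
      · apply ChainComplex.exactAt_succ_single_obj⟩

lemma exact_map_d_of_isZero_leftDerived {D : Type*} [Category* D] [Abelian D]
    (P : ProjectiveResolution X) (F : C ⥤ D) [F.Additive] (n : ℕ)
    (h : IsZero ((F.leftDerived (n + 1)).obj X)) :
    (ShortComplex.mk (F.map (P.complex.d (n + 2) (n + 1))) (F.map (P.complex.d (n + 1) n))
      (by rw [← F.map_comp, P.complex.d_comp_d, F.map_zero])).Exact := by
  have hD : ((F.mapHomologicalComplex _).obj P.complex).ExactAt (n + 1) := by
    rw [HomologicalComplex.exactAt_iff_isZero_homology]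
    exact h.of_iso (P.isoLeftDerivedObj F (n + 1)).symm
  rwa [HomologicalComplex.exactAt_iff' _ (n + 2) (n + 1) n (by simp) (by simp)] at hD

end CategoryTheory.ProjectiveResolution

open Function

section

variable {R : Type*} [CommRing R] {M : Type*} [AddCommGroup M] [Module R M]
  {ι : Type*} [Fintype ι] [DecidableEq ι]

theorem TensorProduct.tmul_pi_eq_zero_iff (m : M) (x : ι → R) :
    m ⊗ₜ[R] x = 0 ↔ ∀ i, x i • m = 0 := by
  rw [← (piScalarRight R R M ι).map_eq_zero_iff, funext_iff]
  simp

theorem coord_mem_annihilator_of_lTensor_injective {N : Type*} [AddCommGroup N] [Module R N]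
    {p : (ι → R) →ₗ[R] N} (hp : Injective (p.lTensor M)) {x : ι → R} (hx : x ∈ LinearMap.ker p)
    (i : ι) : x i ∈ Module.annihilator R M := by
  refine Module.mem_annihilator.mpr fun m => (tmul_pi_eq_zero_iff m x).mp ?_ i
  apply hp
  rw [LinearMap.lTensor_tmul, LinearMap.mem_ker.mp hx, tmul_zero, map_zero]

theorem lTensor_subtype_eq_zero_of_coord_mem_annihilator {K : Submodule R (ι → R)}
    (hK : ∀ x ∈ K, ∀ i, x i ∈ Module.annihilator R M) : K.subtype.lTensor M = 0 :=
  TensorProduct.ext' fun m x => (tmul_pi_eq_zero_iff m x.1).mpr fun i =>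
    Module.mem_annihilator.mp (hK x x.2 i) m

end

theorem IsLocalRing.subsingleton_tensorProduct_iff {R : Type*} [CommRing R] [IsLocalRing R]
    {M N : Type*} [AddCommGroup M] [Module R M] [AddCommGroup N] [Module R N]
    [Module.Finite R M] [Module.Finite R N] :
    Subsingleton (M ⊗[R] N) ↔ Subsingleton M ∨ Subsingleton N := by
  refine ⟨fun h => ?_, by rintro (h | h) <;> infer_instance⟩
  rw [← subsingleton_tensorProduct (R := R) (M := M),
    ← subsingleton_tensorProduct (R := R) (M := N)]
  by_contra! hMN
  obtain ⟨_, _⟩ := hMN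
  have := (AlgebraTensorModule.distribBaseChange R (ResidueField R) M N).nontrivial
  exact not_subsingleton (ResidueField R ⊗[R] (M ⊗[R] N)) inferInstance

theorem lTensor_ker_subtype_injective_of_subsingleton_tor {R : Type u} [CommRing R]
    {L N F : Type u} [AddCommGroup L] [Module R L] [AddCommGroup N] [Module R N]
    [AddCommGroup F] [Module R F] [Module.Projective R F] {p : F →ₗ[R] N} (hp : Surjective p)
    (htor : Subsingleton (((Tor (ModuleCat.{u} R) 1).obj (ModuleCat.of R L)).obj
      (ModuleCat.of R N))) :
    Injective ((LinearMap.ker p).subtype.lTensor L) := by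
  let K := LinearMap.ker p
  let q := Finsupp.linearCombination R (id : K → K)
  have hq : Surjective q := Finsupp.linearCombination_id_surjective R K
  let d := ModuleCat.ofHom (K.subtype ∘ₗ q)
  have w : d ≫ ModuleCat.ofHom p = 0 := ModuleCat.hom_ext (LinearMap.ext fun x => (q x).2)
  have hexact : (ShortComplex.mk d (ModuleCat.ofHom p) w).Exact := by
    rw [ShortComplex.moduleCat_exact_iff]
    intro x hx
    obtain ⟨y, hy⟩ := hq ⟨x, hx⟩
    exact ⟨y, congrArg Subtype.val hy⟩
  have : Epi (ModuleCat.ofHom p) := (ModuleCat.epi_iff_surjective _).mpr hp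
  let P := ProjectiveResolution.ofPresentation d _ w hexact
  have hP := P.exact_map_d_of_isZero_leftDerived
    ((MonoidalCategory.tensoringLeft _).obj (ModuleCat.of R L)) 0
    (@ModuleCat.isZero_of_subsingleton _ _ _ htor)
  rw [ShortComplex.moduleCat_exact_iff] at hP
  have h10 : P.complex.d 1 0 = d := ProjectiveResolution.complexOfPresentation_d_one_zero d
  let d₂ : P.complex.X 2 →ₗ[R] (K →₀ R) := (P.complex.d 2 1).hom
  have hq₂ : q ∘ₗ d₂ = 0 := by
    have := P.complex.d_comp_d 2 1 0
    rw [h10] at this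
    exact LinearMap.ext fun v =>
      Subtype.ext (LinearMap.congr_fun (congrArg ModuleCat.Hom.hom this) v)
  -- A lift of `z` along `L ⊗ q` is a cycle, hence a boundary, and `L ⊗ q` kills boundaries.
  rw [injective_iff_map_eq_zero]
  intro z hz
  obtain ⟨w, rfl⟩ := q.lTensor_surjective L hq z
  obtain ⟨y, rfl⟩ := hP w (by
    change (P.complex.d 1 0).hom.lTensor L w = 0
    rw [h10]
    change (K.subtype ∘ₗ q).lTensor L w = 0
    rwa [LinearMap.lTensor_comp_apply])
  change q.lTensor L (d₂.lTensor L y) = 0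
  rw [← LinearMap.lTensor_comp_apply, hq₂, LinearMap.lTensor_zero, LinearMap.zero_apply]

theorem stmt17_general {R : Type u} [CommRing R] [IsNoetherianRing R] [IsLocalRing R]
    {M N : Type u} [AddCommGroup M] [Module R M] [Module.Finite R M]
    [AddCommGroup N] [Module R N] [Module.Finite R N]
    (h : Nonempty ((M ⊗[R] N) ≃ₗ[R] (Fin (minGens R N) → M)))
    (L : Type u) [AddCommGroup L] [Module R L] [Module.Finite R L] [Nontrivial L]
    (hL : Module.annihilator R M ≤ Module.annihilator R L)
    (htor : Subsingleton (((Tor (ModuleCat.{u} R) 1).obj (ModuleCat.of R L)).obj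
      (ModuleCat.of R N))) :
    Module.Free R N := by
  obtain ⟨p, hp⟩ : ∃ p : (Fin (minGens R N) → R) →ₗ[R] N, Surjective p :=
    Nat.sInf_mem (Module.Finite.exists_fin' R N)
  obtain ⟨e⟩ := h
  have hM : Injective (p.lTensor M) :=
    let e' := piScalarRight R R M _ ≪≫ₗ e.symm
    OrzechProperty.injective_of_surjective_of_injective e'.toLinearMap _ e'.injective
      (p.lTensor_surjective M hp)
  have hzero : (LinearMap.ker p).subtype.lTensor L = 0 :=
    lTensor_subtype_eq_zero_of_coord_mem_annihilator fun x hx i =>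
      hL (coord_mem_annihilator_of_lTensor_injective hM hx i)
  have hinj := lTensor_ker_subtype_injective_of_subsingleton_tor hp htor
  have : Subsingleton (L ⊗[R] LinearMap.ker p) :=
    ⟨fun a b => hinj (by rw [hzero, LinearMap.zero_apply, LinearMap.zero_apply])⟩
  have : Subsingleton (LinearMap.ker p) :=
    (IsLocalRing.subsingleton_tensorProduct_iff.mp this).resolve_left (not_subsingleton L)
  exact Module.Free.of_equiv
    (LinearEquiv.ofBijective p ⟨LinearMap.ker_eq_bot.mp (Submodule.eq_bot_of_subsingleton), hp⟩)

/-- Let `R` be a commutative Noetherian local ring and `M ≠ 0`, `N` finitely generated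
`R`-modules with `M ⊗_R N ≅ M^{μ(N)}`.  If `L` is a nonzero finitely generated
`R`-module with `Ann_R M ⊆ Ann_R L` and `Tor₁(L, N) = 0`, then `N` is free over `R`. -/
theorem stmt17 {R : Type u} [CommRing R] [IsNoetherianRing R] [IsLocalRing R]
    {M N : Type u} [AddCommGroup M] [Module R M] [Module.Finite R M] [Nontrivial M]
    [AddCommGroup N] [Module R N] [Module.Finite R N]
    (h : Nonempty ((M ⊗[R] N) ≃ₗ[R] (Fin (minGens R N) → M)))
    (L : Type u) [AddCommGroup L] [Module R L] [Module.Finite R L] [Nontrivial L]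
    (hL : Module.annihilator R M ≤ Module.annihilator R L)
    (htor : Subsingleton (((Tor (ModuleCat.{u} R) 1).obj (ModuleCat.of R L)).obj
      (ModuleCat.of R N))) :
    Module.Free R N :=
  stmt17_general h L hL htor
end
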